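/- Let G be a group and let (R_α)_{α ≤ γ} be an ordinal-indexed ascending chain of normal subgroups of G with R_0 = 1, R_λ = ⋃_{β<λ} R_β for every limit ordinal λ ≤ γ, and such that for every α < γ, every element of R_{α+1} maps to a nil-element of G/R_α (i.e., for every g ∈ R_{α+1} and every a ∈ G there is n ≥ 1 with e_n(a,g) ∈ R_α). Then every element g ∈ R_γ is an unbounded quasi-nil element of G: for every sequence a_1, a_2, a_3, … of elements of G there exist k ≥ 1 and n_1,…,n_k ≥ 1 such that ε_{(n_1,…,n_k)}(a_1,…,a_k; g) = 1. -/

import Mathlib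

/-- Engel words with the convention of the paper: the commutator is
`[x, y] = x⁻¹ * y⁻¹ * x * y`, `engelWord 0 x y = x` and
`engelWord (n+1) x y = [engelWord n x y, y]`; thus for `n ≥ 1`,
`engelWord n x y` is the Engel word `e_n(x, y)`. -/
def engelWord {G : Type*} [Group G] : ℕ → G → G → G
  | 0, x, _ => x
  | n + 1, x, y => (engelWord n x y)⁻¹ * y⁻¹ * engelWord n x y * y

/-- Iterated Engel words: `epsEngel [(n₁,a₁),…,(n_k,a_k)] y` is
`ε_{(n₁,…,n_k)}(a₁,…,a_k; y)`, defined by `ε_{(n₁)}(a₁;y) = e_{n₁}(a₁,y)` and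
`ε_{(n₁,…,n_k)}(a₁,…,a_k;y) = e_{n_k}(a_k, ε_{(n₁,…,n_{k-1})}(a₁,…,a_{k-1};y))`. -/
def epsEngel {G : Type*} [Group G] (l : List (ℕ × G)) (y : G) : G :=
  l.foldl (fun z p => engelWord p.1 p.2 z) y

/-- `g` is a nil-element if for every `a` there is `n ≥ 1` with `e_n(a, g) = 1`. -/
def IsNilElement {G : Type*} [Group G] (g : G) : Prop :=
  ∀ a : G, ∃ n, 1 ≤ n ∧ engelWord n a g = 1

/-- A group is locally nilpotent if every finitely generated subgroup is nilpotent. -/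
def LocallyNilpotent (G : Type*) [Group G] : Prop :=
  ∀ H : Subgroup G, H.FG → Group.IsNilpotent H

/-- `g` is quasi-nil of order ≤ `k`: there are functions `ν i : G^(i+1) → ℕ` (with values ≥ 1,
`ν i` depending only on `a₁,…,a_{i+1}` and `g`) such that for all `a : Fin k → G`,
`ε_{(ν₁(a₁),…,ν_k(a₁,…,a_k))}(a₁,…,a_k; g) = 1`. -/
def IsQuasiNilOfOrder {G : Type*} [Group G] (k : ℕ) (g : G) : Prop :=
  ∃ ν : ∀ i : Fin k, (Fin ((i : ℕ) + 1) → G) → ℕ,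
    (∀ i f, 1 ≤ ν i f) ∧
    ∀ a : Fin k → G,
      epsEngel (List.ofFn fun i : Fin k =>
        (ν i fun j => a (Fin.castLE i.isLt j), a i)) g = 1

/-- `g` is quasi-nil if it is quasi-nil of order ≤ `k` for some `k ≥ 1`. -/
def IsQuasiNil {G : Type*} [Group G] (g : G) : Prop :=
  ∃ k, 1 ≤ k ∧ IsQuasiNilOfOrder k g

/-- `g` maps to a nil-element of the quotient `G ⧸ N` (for `N` normal). -/
def IsNilElementQuot {G : Type*} [Group G] (N : Subgroup G) (hN : N.Normal) (g : G) : Prop :=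
  @IsNilElement (G ⧸ N) (@QuotientGroup.Quotient.group G _ N hN) (QuotientGroup.mk g)

/-!
Transfinite induction along the series. If `g ∈ R (α + 1)`, then `e_n(a₀, g) ∈ R α` for some
`n ≥ 1`, and prefixing `n` to the exponents that kill `e_n(a₀, g)` along the shifted sequence
`a₁, a₂, …` gives exponents that kill `g`. At a limit ordinal the series is a directed union,
so `g` already lies in an earlier term.
-/

section

variable {G : Type*} [Group G]

def IsUnboundedQuasiNil (g : G) : Prop :=
  ∀ a : ℕ → G, ∃ k, 1 ≤ k ∧ ∃ ns : Fin k → ℕ, (∀ i, 1 ≤ ns i) ∧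
    epsEngel (List.ofFn fun i : Fin k => (ns i, a (i : ℕ))) g = 1

theorem epsEngel_cons (n : ℕ) (x : G) (l : List (ℕ × G)) (y : G) :
    epsEngel ((n, x) :: l) y = epsEngel l (engelWord n x y) :=
  rfl

theorem isUnboundedQuasiNil_one : IsUnboundedQuasiNil (1 : G) :=
  fun _ => ⟨1, le_rfl, fun _ => 1, fun _ => le_rfl, by simp [epsEngel, engelWord]⟩

theorem IsUnboundedQuasiNil.of_forall_engelWord {g : G}
    (h : ∀ x, ∃ n, 1 ≤ n ∧ IsUnboundedQuasiNil (engelWord n x g)) : IsUnboundedQuasiNil g := by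
  intro a
  obtain ⟨n, hn, hquasi⟩ := h (a 0)
  obtain ⟨k, -, ns, hns, hε⟩ := hquasi fun i => a (i + 1)
  refine ⟨k + 1, Nat.le_add_left 1 k, Fin.cons n ns, Fin.cases hn hns, ?_⟩
  simpa [List.ofFn_succ, epsEngel_cons] using hε

theorem Subgroup.exists_lt_mem_of_mem_iSup_lt {ι : Type*} [LinearOrder ι] {R : ι → Subgroup G}
    {α β₀ : ι} (hβ₀ : β₀ < α) (hR : MonotoneOn R (Set.Iio α)) {g : G}
    (hg : g ∈ ⨆ β < α, R β) : ∃ β < α, g ∈ R β := by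
  refine (Subgroup.mem_biSup_of_directedOn (p := (· < α)) (K := R) hβ₀ ?_).mp hg
  intro i hi j hj
  exact ⟨max i j, max_lt hi hj, hR hi (max_lt hi hj) (le_max_left i j),
    hR hj (max_lt hi hj) (le_max_right i j)⟩

theorem isUnboundedQuasiNil_of_mem_of_le {γ : Ordinal} {R : Ordinal → Subgroup G}
    (hbot : R 0 = ⊥) (hmono : ∀ α β : Ordinal, α ≤ β → β ≤ γ → R α ≤ R β)
    (hlim : ∀ lam ≤ γ, Order.IsSuccLimit lam → R lam = ⨆ β < lam, R β)
    (hsucc : ∀ α < γ, ∀ g ∈ R (α + 1), ∀ a : G, ∃ n, 1 ≤ n ∧ engelWord n a g ∈ R α)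
    (α : Ordinal) : α ≤ γ → ∀ g ∈ R α, IsUnboundedQuasiNil g := by
  induction α using Ordinal.limitRecOn with
  | zero =>
    intro _ g hg
    rw [hbot, Subgroup.mem_bot] at hg
    exact hg ▸ isUnboundedQuasiNil_one
  | add_one α ih =>
    intro hα g hg
    have hαγ : α < γ := (Order.lt_add_one_iff.mpr le_rfl).trans_le hα
    refine IsUnboundedQuasiNil.of_forall_engelWord fun x => ?_
    obtain ⟨n, hn, hmem⟩ := hsucc α hαγ g hg x
    exact ⟨n, hn, ih hαγ.le _ hmem⟩
  | limit α hα ih =>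
    intro hαγ g hg
    have hmonoα : MonotoneOn R (Set.Iio α) := fun β _ β' hβ' hle =>
      hmono β β' hle (hβ'.trans_le hαγ).le
    rw [hlim α hαγ hα] at hg
    obtain ⟨β, hβ, hgβ⟩ := Subgroup.exists_lt_mem_of_mem_iSup_lt hα.bot_lt hmonoα hg
    exact ih β hβ (hβ.le.trans hαγ) g hgβ

end

theorem unbounded_quasiNil_of_upper_radical_series_general {G : Type*} [Group G]
    (γ : Ordinal) (R : Ordinal → Subgroup G)
    (hbot : R 0 = ⊥)
    (hmono : ∀ α β : Ordinal, α ≤ β → β ≤ γ → R α ≤ R β)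
    (hlim : ∀ lam ≤ γ, Order.IsSuccLimit lam → R lam = ⨆ β < lam, R β)
    (hsucc : ∀ α < γ, ∀ g ∈ R (α + 1), ∀ a : G, ∃ n, 1 ≤ n ∧ engelWord n a g ∈ R α)
    (g : G) (hg : g ∈ R γ) (a : ℕ → G) :
    ∃ k, 1 ≤ k ∧ ∃ ns : Fin k → ℕ, (∀ i, 1 ≤ ns i) ∧
      epsEngel (List.ofFn fun i : Fin k => (ns i, a (i : ℕ))) g = 1 :=
  isUnboundedQuasiNil_of_mem_of_le hbot hmono hlim hsucc γ le_rfl g hg a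

/-- for an ordinal-indexed ascending chain of normal subgroups `R α`
(`α ≤ γ`) with `R 0 = 1`, continuous at limit ordinals, and such that every element of
`R (α+1)` maps to a nil-element of `G / R α`, every `g ∈ R γ` is an unbounded quasi-nil
element of `G`. -/
theorem unbounded_quasiNil_of_upper_radical_series {G : Type*} [Group G]
    (γ : Ordinal) (R : Ordinal → Subgroup G)
    (hbot : R 0 = ⊥)
    (hnorm : ∀ α ≤ γ, (R α).Normal)
    (hmono : ∀ α β : Ordinal, α ≤ β → β ≤ γ → R α ≤ R β)
    (hlim : ∀ lam ≤ γ, Order.IsSuccLimit lam → R lam = ⨆ β < lam, R β)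
    (hsucc : ∀ α < γ, ∀ g ∈ R (α + 1), ∀ a : G, ∃ n, 1 ≤ n ∧ engelWord n a g ∈ R α)
    (g : G) (hg : g ∈ R γ) (a : ℕ → G) :
    ∃ k, 1 ≤ k ∧ ∃ ns : Fin k → ℕ, (∀ i, 1 ≤ ns i) ∧
      epsEngel (List.ofFn fun i : Fin k => (ns i, a (i : ℕ))) g = 1 :=
  unbounded_quasiNil_of_upper_radical_series_general γ R hbot hmono hlim hsucc g hg a
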